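/- For every real number y, (1/Re_m)·B1''(y) + u1'(y) = 0. That is, the Hartmann profiles satisfy the stationary induction (Faraday) equation −(1/Re_m)·B1''(y) − u1'(y)·B0 = 0 with applied transverse field B0 = 1; the proof uses the identity Ha² = Re·Re_m. -/

import Mathlib

/-!
Both profiles are built from `sinh (y * Ha)` and `cosh (y * Ha)`, so `B1''` and `u1'` are both
multiples of `sinh (y * Ha)`: differentiating twice brings out `Ha ^ 2 = Re * Rem`, which the
factor `1 / Rem` turns into `Re`, while the prefactor `1 / tanh (Ha / 2)` of `u1` turns its
`1 / cosh (Ha / 2)` into the `1 / sinh (Ha / 2)` of `B1`. The two terms then cancel.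
-/

open Real

lemma deriv_mul_one_sub_cosh_mul_div (A k c y : ℝ) :
    deriv (fun y => A * (1 - cosh (y * k) / c)) y = -(A * (sinh (y * k) * k / c)) :=
  (((hasDerivAt_mul_const k).cosh.div_const c).const_sub 1 |>.const_mul A).deriv.trans (by ring)

lemma deriv_mul_sinh_mul_div_sub (A k s : ℝ) :
    deriv (fun y => A * (sinh (y * k) / s - 2 * y)) = fun y => A * (cosh (y * k) * k / s - 2) :=
  funext fun _ => ((((hasDerivAt_mul_const k).sinh.div_const s).sub
    (hasDerivAt_const_mul 2)).const_mul A).deriv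

lemma deriv_deriv_mul_sinh_mul_div_sub (A k s y : ℝ) :
    deriv (deriv fun y => A * (sinh (y * k) / s - 2 * y)) y = A * (sinh (y * k) * k ^ 2 / s) := by
  rw [deriv_mul_sinh_mul_div_sub]
  exact ((((hasDerivAt_mul_const k).cosh.mul_const k |>.div_const s).sub_const 2).const_mul
    A).deriv.trans (by ring)

theorem hartmann_induction_balance_general
    (Re Rem : ℝ)
    (Ha : ℝ) (hHa : Ha = Real.sqrt (Re * Rem)) (hHapos : 0 < Ha)
    (G : ℝ)
    (u1 B1 : ℝ → ℝ)
    (hu1 : ∀ y : ℝ, u1 y =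
      (G * Re / (2 * Ha * Real.tanh (Ha / 2))) * (1 - Real.cosh (y * Ha) / Real.cosh (Ha / 2)))
    (hB1 : ∀ y : ℝ, B1 y = (G / 2) * (Real.sinh (y * Ha) / Real.sinh (Ha / 2) - 2 * y)) :
    ∀ y : ℝ, (1 / Rem) * deriv (deriv B1) y + deriv u1 y = 0 := by
  intro y
  have hReRem : 0 < Re * Rem := Real.sqrt_pos.mp (hHa ▸ hHapos)
  have hHa_sq : Ha ^ 2 = Re * Rem := by rw [hHa, sq_sqrt hReRem.le]
  have hRem : Rem ≠ 0 := right_ne_zero_of_mul hReRem.ne'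
  have hsinh : sinh (Ha / 2) ≠ 0 := (sinh_pos_iff.mpr (half_pos hHapos)).ne'
  have hcosh : cosh (Ha / 2) ≠ 0 := (cosh_pos _).ne'
  rw [funext hB1, funext hu1, deriv_deriv_mul_sinh_mul_div_sub, deriv_mul_one_sub_cosh_mul_div,
    tanh_eq_sinh_div_cosh]
  field_simp
  linear_combination G * sinh (y * Ha) * hHa_sq

/-- Hartmann flow: the profiles satisfy the stationary induction (Faraday)
equation `(1/Re_m)·B1''(y) + u1'(y) = 0`. -/
theorem hartmann_induction_balance
    (Re Rem : ℝ) (hRe : 0 < Re) (hRem : 0 < Rem)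
    (Ha : ℝ) (hHa : Ha = Real.sqrt (Re * Rem)) (hHapos : 0 < Ha)
    (G : ℝ) (hG : G = 2 * Ha * Real.sinh (Ha / 2) / (Re * (Real.cosh (Ha / 2) - 1)))
    (u1 B1 : ℝ → ℝ)
    (hu1 : ∀ y : ℝ, u1 y =
      (G * Re / (2 * Ha * Real.tanh (Ha / 2))) * (1 - Real.cosh (y * Ha) / Real.cosh (Ha / 2)))
    (hB1 : ∀ y : ℝ, B1 y = (G / 2) * (Real.sinh (y * Ha) / Real.sinh (Ha / 2) - 2 * y)) :
    ∀ y : ℝ, (1 / Rem) * deriv (deriv B1) y + deriv u1 y = 0 :=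
  hartmann_induction_balance_general Re Rem Ha hHa hHapos G u1 B1 hu1 hB1
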